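/- Let K and k_1,…,k_t be positive integers with k_1+⋯+k_t = 2K. On the candidate set {a,b,c} with tie-breaking order c ≻ a ≻ b, let P be the weighted profile consisting of weight 7K of the vote b≻c≻a, weight K of b≻a≻c, weight 4K of a≻c≻b, weight 2K of a≻b≻c, and weight 1 of c≻a≻b, and let there be t manipulators where manipulator i casts one vote of weight 2k_i. Consider the runoff combination Copeland+plurality. Then there exists a choice of manipulator votes making c the Copeland+plurality winner of the combined weighted profile if and only if there exists S ⊆ {1,…,t} with Σ_{i∈S} k_i = K. -/

import Mathlib

/-
Weighted voting on the three-candidate set {a, b, c}. A weighted profile is a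
finite list of pairs (vote, weight), where a vote is a duplicate-free list of
all three candidates (earlier = more preferred) and the weight is a positive
natural number. `T` always denotes the tie-breaking (strict linear) order.
-/

inductive Cand : Type
  | a | b | c
  deriving DecidableEq

instance instFintypeCand : Fintype Cand :=
  ⟨{Cand.a, Cand.b, Cand.c}, fun x => by cases x <;> decide⟩

/-- A weighted profile: a list of (vote, weight) pairs. -/
abbrev WProfile := List (List Cand × ℕ)

/-- The total weight `n` of a weighted profile. -/
def totalW (P : WProfile) : ℕ := (P.map Prod.snd).sum

/-- `N P x y`: the total weight of votes in `P` ranking `x` above `y`. -/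
def Nw (P : WProfile) (x y : Cand) : ℕ :=
  ((P.filter fun p => p.1.idxOf x < p.1.idxOf y).map Prod.snd).sum

/-- The `k`-approval score of `e`: the total weight of votes ranking `e`
among the top `k` positions. -/
def kApproval (P : WProfile) (k : ℕ) (e : Cand) : ℕ :=
  ((P.filter fun p => p.1.idxOf e < k).map Prod.snd).sum

/-- The Bucklin score of `e`: the least `k` such that the `k`-approval score
of `e` is strictly greater than half the total weight. -/
noncomputable def bucklinScore (P : WProfile) (e : Cand) : ℕ :=
  sInf {k | totalW P < 2 * kApproval P k e}

/-- `v` is a vote: a strict linear order of all three candidates. -/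
def ValidVote (v : List Cand) : Prop := v.Nodup ∧ v.toFinset = Finset.univ

/-- A valid weighted profile: every vote is a linear order and every weight is
positive. -/
def ValidWProfile (P : WProfile) : Prop := ∀ p ∈ P, ValidVote p.1 ∧ 0 < p.2

/-- The `T`-greatest candidate among the maximisers of `f`. -/
def argmaxT (T : LinearOrder Cand) (f : Cand → ℕ) : Cand :=
  @Finset.max' Cand T (Finset.univ.filter fun e => ∀ z, f z ≤ f e) (by
    obtain ⟨w, hw, hm⟩ := Finset.exists_max_image Finset.univ f ⟨Cand.a, Finset.mem_univ _⟩
    exact ⟨w, Finset.mem_filter.2 ⟨Finset.mem_univ _, fun z => hm z (Finset.mem_univ _)⟩⟩)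

/-- The `T`-greatest candidate among the minimisers of `f`. -/
def argminT (T : LinearOrder Cand) (f : Cand → ℕ) : Cand :=
  @Finset.max' Cand T (Finset.univ.filter fun e => ∀ z, f e ≤ f z) (by
    obtain ⟨w, hw, hm⟩ := Finset.exists_min_image Finset.univ f ⟨Cand.a, Finset.mem_univ _⟩
    exact ⟨w, Finset.mem_filter.2 ⟨Finset.mem_univ _, fun z => hm z (Finset.mem_univ _)⟩⟩)

/-- The plurality score of `e`: the total weight of votes ranking `e` first. -/
def pluralityScore (P : WProfile) (e : Cand) : ℕ :=
  ((P.filter fun p => p.1.head? = some e).map Prod.snd).sum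

/-- The plurality winner. -/
def pluralityWinner (T : LinearOrder Cand) (P : WProfile) : Cand :=
  argmaxT T (pluralityScore P)

/-- The Copeland score of `x`: the number of candidates `z ≠ x` with
`N(x,z) > N(z,x)`. -/
def copelandScore (P : WProfile) (x : Cand) : ℕ :=
  (Finset.univ.filter fun z => z ≠ x ∧ Nw P z x < Nw P x z).card

/-- The Copeland winner. -/
def copelandWinner (T : LinearOrder Cand) (P : WProfile) : Cand :=
  argmaxT T (copelandScore P)

/-- The maximin score of `x`: the minimum of `N(x,z)` over `z ≠ x`. -/
def maximinScore (P : WProfile) (x : Cand) : ℕ :=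
  (((Finset.univ : Finset Cand).erase x).image fun z => Nw P x z).min' (by
    apply Finset.Nonempty.image
    cases x <;> decide)

/-- The maximin winner. -/
def maximinWinner (T : LinearOrder Cand) (P : WProfile) : Cand :=
  argmaxT T (maximinScore P)

/-- The Bucklin winner: the `T`-greatest candidate of minimal Bucklin score. -/
noncomputable def bucklinWinner (T : LinearOrder Cand) (P : WProfile) : Cand :=
  argminT T (bucklinScore P)

/-- Winner of the pairwise contest between `x` and `z` (the `T`-greater
candidate winning on a tie). -/
def pairWin (T : LinearOrder Cand) (P : WProfile) (x z : Cand) : Cand :=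
  if Nw P z x < Nw P x z then x
  else if Nw P x z < Nw P z x then z
  else if T.lt x z then z else x

/-- The candidate other than the two (distinct) given ones. -/
def third (x y : Cand) : Cand :=
  if Cand.a ≠ x ∧ Cand.a ≠ y then Cand.a
  else if Cand.b ≠ x ∧ Cand.b ≠ y then Cand.b
  else Cand.c

/-- The cup winner for the agenda in which `p` and `q` meet first and the
winner then meets the remaining candidate. -/
def cupWinner (T : LinearOrder Cand) (p q : Cand) (P : WProfile) : Cand :=
  pairWin T P (pairWin T P p q) (third p q)

/-- Run-off combination `X + Y`: the common winner if `X` and `Y` agree;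
otherwise the pairwise-majority winner between the two winners, with the
`T`-greater candidate winning a tied run-off. -/
def runoffWinner (T : LinearOrder Cand) (X Y : WProfile → Cand) (P : WProfile) : Cand :=
  let x := X P
  let y := Y P
  if x = y then x
  else if Nw P y x < Nw P x y then x
  else if Nw P x y < Nw P y x then y
  else if T.lt x y then y else x

/-- Tie-breaking priority realising the order c ≻ a ≻ b. -/
def prio : Cand → ℕ
  | .a => 1
  | .b => 0
  | .c => 2

/-- The tie-breaking order c ≻ a ≻ b. -/
def Tcab : LinearOrder Cand := LinearOrder.lift' prio (by decide)

/-- The non-manipulators' profile: weight 7K of b≻c≻a, K of b≻a≻c,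
4K of a≻c≻b, 2K of a≻b≻c and 1 of c≻a≻b. -/
def P15 (K : ℕ) : WProfile :=
  [([Cand.b, Cand.c, Cand.a], 7 * K), ([Cand.b, Cand.a, Cand.c], K),
   ([Cand.a, Cand.c, Cand.b], 4 * K), ([Cand.a, Cand.b, Cand.c], 2 * K),
   ([Cand.c, Cand.a, Cand.b], 1)]

/-!
The manipulators carry total weight 4K. Whatever they vote, b beats c (10K against at most
8K + 1) and c has plurality score at most 4K + 1 < 8K, so c can only win as the Copeland winner
against a as the plurality winner, and c must then beat a. For a to be the plurality winner the
manipulators ranking a first must carry weight at least 2K; for c to beat a those ranking a above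
c may carry at most 2K. Hence the manipulators ranking a first have k-sum exactly K.

Conversely, if the k-sum over S is K, let S vote a ≻ c ≻ b and the others c ≻ a ≻ b. This
creates the cycle a > b > c > a, so all Copeland scores are 1 and c wins the tie; a and b tie
for plurality at 8K and a wins the tie; and c beats a by 9K + 1 to 9K.
-/

open Cand

theorem ValidVote.mem {v : List Cand} (hv : ValidVote v) (x : Cand) : x ∈ v :=
  List.mem_toFinset.1 (hv.2 ▸ Finset.mem_univ x)

theorem List.idxOf_head_lt_idxOf {α : Type*} [BEq α] [LawfulBEq α] {v : List α} {x y : α}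
    (h : v.head? = some x) (hy : y ∈ v) (hxy : x ≠ y) : v.idxOf x < v.idxOf y := by
  obtain ⟨l, rfl⟩ := List.head?_eq_some_iff.1 h
  rw [List.idxOf_cons_self, List.idxOf_cons_ne _ hxy]
  exact Nat.succ_pos _

theorem List.sum_map_snd_filter {α : Type*} (l : List (α × ℕ)) (q : α × ℕ → Prop)
    [DecidablePred q] :
    ((l.filter fun p => q p).map Prod.snd).sum = (l.map fun p => if q p then p.2 else 0).sum := by
  induction l with
  | nil => rfl
  | cons p l ih => by_cases hp : q p <;> simp [hp, ih]

theorem sum_map_snd_filter_ofFn_ite {α : Type*} {t : ℕ} (S : Finset (Fin t)) (u u' : α)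
    (w : Fin t → ℕ) (q : α → Prop) [DecidablePred q] :
    (((List.ofFn fun i => (if i ∈ S then u else u', w i)).filter fun p => q p.1).map Prod.snd).sum
      = (([(u, ∑ i ∈ S, w i), (u', ∑ i ∈ Sᶜ, w i)].filter fun p => q p.1).map
          Prod.snd).sum := by
  rw [List.sum_map_snd_filter, List.sum_map_snd_filter, List.map_ofFn, List.sum_ofFn,
    ← Finset.sum_add_sum_compl S]
  simp only [Function.comp_apply, List.map_cons, List.map_nil, List.sum_cons, List.sum_nil,
    add_zero]
  congr 1
  · rw [Finset.sum_congr rfl fun i hi => by rw [if_pos hi]]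
    split_ifs <;> simp
  · rw [Finset.sum_congr rfl fun i hi => by rw [if_neg (Finset.mem_compl.1 hi)]]
    split_ifs <;> simp

section WeightedProfile

variable (P Q : WProfile) (x y : Cand)

theorem Nw_eq_sum_ite :
    Nw P x y = (P.map fun p => if p.1.idxOf x < p.1.idxOf y then p.2 else 0).sum :=
  List.sum_map_snd_filter P fun p => p.1.idxOf x < p.1.idxOf y

theorem pluralityScore_eq_sum_ite :
    pluralityScore P x = (P.map fun p => if p.1.head? = some x then p.2 else 0).sum :=
  List.sum_map_snd_filter P fun p => p.1.head? = some x

theorem Nw_append : Nw (P ++ Q) x y = Nw P x y + Nw Q x y := by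
  simp [Nw, List.filter_append]

theorem pluralityScore_append :
    pluralityScore (P ++ Q) x = pluralityScore P x + pluralityScore Q x := by
  simp [pluralityScore, List.filter_append]

theorem Nw_le_totalW : Nw P x y ≤ totalW P :=
  (List.filter_sublist.map _).sum_le_sum fun _ _ => Nat.zero_le _

theorem pluralityScore_le_totalW : pluralityScore P x ≤ totalW P :=
  (List.filter_sublist.map _).sum_le_sum fun _ _ => Nat.zero_le _

variable {P x y}

theorem Nw_add_Nw_eq_totalW (hP : ∀ p ∈ P, ValidVote p.1) (hxy : x ≠ y) :
    Nw P x y + Nw P y x = totalW P := by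
  rw [Nw_eq_sum_ite, Nw_eq_sum_ite, totalW, ← List.sum_map_add]
  congr 1
  refine List.map_congr_left fun p hp => ?_
  have hne : p.1.idxOf x ≠ p.1.idxOf y := fun h =>
    hxy ((List.idxOf_inj ((hP p hp).mem x)).1 h)
  split_ifs <;> omega

theorem pluralityScore_le_Nw (hP : ∀ p ∈ P, ValidVote p.1) (hxy : x ≠ y) :
    pluralityScore P x ≤ Nw P x y := by
  rw [pluralityScore_eq_sum_ite, Nw_eq_sum_ite]
  refine List.sum_le_sum fun p hp => ?_
  by_cases h : p.1.head? = some x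
  · simp [h, List.idxOf_head_lt_idxOf h ((hP p hp).mem y) hxy]
  · simp [h]

end WeightedProfile

section OfFn

variable {t : ℕ} (v : Fin t → List Cand) (w : Fin t → ℕ) (x y : Cand)

theorem totalW_ofFn : totalW (List.ofFn fun i => (v i, w i)) = ∑ i, w i := by
  rw [totalW, List.map_ofFn, List.sum_ofFn]
  rfl

theorem pluralityScore_ofFn :
    pluralityScore (List.ofFn fun i => (v i, w i)) x = ∑ i with (v i).head? = some x, w i := by
  rw [pluralityScore_eq_sum_ite, List.map_ofFn, List.sum_ofFn, Finset.sum_filter]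
  rfl

theorem Nw_ofFn_ite (S : Finset (Fin t)) (u u' : List Cand) :
    Nw (List.ofFn fun i => (if i ∈ S then u else u', w i)) x y
      = Nw [(u, ∑ i ∈ S, w i), (u', ∑ i ∈ Sᶜ, w i)] x y :=
  sum_map_snd_filter_ofFn_ite S u u' w fun l => l.idxOf x < l.idxOf y

theorem pluralityScore_ofFn_ite (S : Finset (Fin t)) (u u' : List Cand) :
    pluralityScore (List.ofFn fun i => (if i ∈ S then u else u', w i)) x
      = pluralityScore [(u, ∑ i ∈ S, w i), (u', ∑ i ∈ Sᶜ, w i)] x :=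
  sum_map_snd_filter_ofFn_ite S u u' w fun l => l.head? = some x

end OfFn

section ArgmaxT

variable (T : LinearOrder Cand) (f : Cand → ℕ)

theorem le_argmaxT (z : Cand) : f z ≤ f (argmaxT T f) := by
  unfold argmaxT
  exact (Finset.mem_filter.1
    (@Finset.max'_mem Cand T (Finset.univ.filter fun e => ∀ z, f z ≤ f e) _)).2 z

theorem argmaxT_eq {x : Cand} (hmax : ∀ z, f z ≤ f x) (hgt : ∀ z, T.lt x z → f z < f x) :
    argmaxT T f = x := by
  let _ := T
  have hle : x ≤ argmaxT T f :=
    Finset.le_max' _ _ (Finset.mem_filter.2 ⟨Finset.mem_univ _, hmax⟩)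
  rcases hle.lt_or_eq with hlt | heq
  · exact absurd (le_argmaxT T f x) (not_le.2 (hgt _ hlt))
  · exact heq.symm

end ArgmaxT

section Copeland

variable {P : WProfile} {x y : Cand}

theorem copelandScore_pos_iff : 0 < copelandScore P x ↔ ∃ z ≠ x, Nw P z x < Nw P x z := by
  simp [copelandScore, Finset.card_pos, Finset.Nonempty]

theorem copelandScore_le_one (hyx : y ≠ x) (h : Nw P x y ≤ Nw P y x) :
    copelandScore P x ≤ 1 := by
  calc copelandScore P x ≤ ((Finset.univ.erase x).erase y).card := by
        refine Finset.card_le_card fun z hz => ?_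
        simp only [Finset.mem_filter] at hz
        simp only [Finset.mem_erase, Finset.mem_univ, and_true]
        exact ⟨fun hzy => by subst hzy; omega, hz.2.1⟩
    _ = 1 := by
        rw [Finset.card_erase_of_mem (by simpa using hyx),
          Finset.card_erase_of_mem (Finset.mem_univ _)]
        rfl

theorem copelandWinner_Tcab_eq_c (hab : Nw P b a < Nw P a b) (hca : Nw P a c < Nw P c a) :
    copelandWinner Tcab P = c := by
  have hc : 1 ≤ copelandScore P c := copelandScore_pos_iff.2 ⟨a, by decide, hca⟩
  have ha := copelandScore_le_one (P := P) (x := a) (y := c) (by decide) hca.le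
  have hb := copelandScore_le_one (P := P) (x := b) (y := a) (by decide) hab.le
  refine argmaxT_eq _ _ (fun z => ?_) fun z hz => absurd hz (by cases z <;> decide)
  cases z <;> omega

theorem Nw_a_c_lt_of_copelandWinner_eq_c {T : LinearOrder Cand} (hcop : copelandWinner T P = c)
    (hbc : Nw P c b < Nw P b c) : Nw P a c < Nw P c a := by
  have hpos : 0 < copelandScore P b := copelandScore_pos_iff.2 ⟨c, by decide, hbc⟩
  have hle := le_argmaxT T (copelandScore P) b
  rw [← copelandWinner, hcop] at hle
  obtain ⟨z, hzc, hz⟩ := copelandScore_pos_iff.1 (hpos.trans_le hle)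
  cases z
  · exact hz
  · omega
  · exact absurd rfl hzc

end Copeland

section Runoff

variable (T : LinearOrder Cand) (X Y : WProfile → Cand) (P : WProfile)

theorem runoffWinner_eq_or : runoffWinner T X Y P = X P ∨ runoffWinner T X Y P = Y P := by
  simp only [runoffWinner]
  split_ifs <;> simp

variable {T X Y P} {x y : Cand}

theorem runoffWinner_eq_left (hx : X P = x) (hy : Y P = y) (hne : x ≠ y)
    (hlt : Nw P y x < Nw P x y) : runoffWinner T X Y P = x := by
  simp only [runoffWinner, hx, hy]
  rw [if_neg hne, if_pos hlt]

theorem runoffWinner_eq_right (hx : X P = x) (hy : Y P = y) (hne : x ≠ y)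
    (hlt : Nw P x y < Nw P y x) : runoffWinner T X Y P = y := by
  simp only [runoffWinner, hx, hy]
  rw [if_neg hne, if_neg (by omega), if_pos hlt]

end Runoff

theorem Nw_P15 (K : ℕ) :
    Nw (P15 K) a b = 6 * K + 1 ∧ Nw (P15 K) b a = 8 * K ∧
    Nw (P15 K) a c = 7 * K ∧ Nw (P15 K) c a = 7 * K + 1 ∧
    Nw (P15 K) b c = 10 * K ∧ Nw (P15 K) c b = 4 * K + 1 := by
  refine ⟨?_, ?_, ?_, ?_, ?_, ?_⟩ <;> simp [Nw, P15] <;> ring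

theorem pluralityScore_P15 (K : ℕ) :
    pluralityScore (P15 K) a = 6 * K ∧ pluralityScore (P15 K) b = 8 * K ∧
    pluralityScore (P15 K) c = 1 := by
  refine ⟨?_, ?_, ?_⟩ <;> simp [pluralityScore, P15] <;> ring

theorem runoffWinner_P15_append_acb_cab {K : ℕ} (hK : 0 < K) :
    runoffWinner Tcab (copelandWinner Tcab) (pluralityWinner Tcab)
      (P15 K ++ [([a, c, b], 2 * K), ([c, a, b], 2 * K)]) = c := by
  set P := P15 K ++ [([a, c, b], 2 * K), ([c, a, b], 2 * K)] with hP
  have hab : Nw P b a < Nw P a b := by simp [hP, Nw, P15]; omega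
  have hca : Nw P a c < Nw P c a := by simp [hP, Nw, P15]; omega
  have hplur : pluralityScore P a = 8 * K ∧ pluralityScore P b = 8 * K ∧
      pluralityScore P c = 2 * K + 1 := by
    refine ⟨?_, ?_, ?_⟩ <;> simp [hP, pluralityScore, P15] <;> ring
  have hplu : pluralityWinner Tcab P = a := by
    refine argmaxT_eq _ _ (fun z => ?_) fun z hz => ?_
    · cases z <;> omega
    · cases z <;> first | exact absurd hz (by decide) | omega
  exact runoffWinner_eq_left (copelandWinner_Tcab_eq_c hab hca) hplu (by decide) hca

theorem runoffWinner_congr {T : LinearOrder Cand} {P P' : WProfile} (hN : Nw P = Nw P')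
    (hp : pluralityScore P = pluralityScore P') :
    runoffWinner T (copelandWinner T) (pluralityWinner T) P
      = runoffWinner T (copelandWinner T) (pluralityWinner T) P' := by
  unfold runoffWinner copelandWinner pluralityWinner copelandScore
  rw [hN, hp]

theorem runoffWinner_eq_c_of_sum_eq {K : ℕ} (hK : 0 < K) {t : ℕ} {k : Fin t → ℕ}
    (hsum : ∑ i, k i = 2 * K) {S : Finset (Fin t)} (hS : ∑ i ∈ S, k i = K) :
    runoffWinner Tcab (copelandWinner Tcab) (pluralityWinner Tcab)
      (P15 K ++ List.ofFn fun i => (if i ∈ S then [a, c, b] else [c, a, b], 2 * k i)) = c := by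
  have hSc : ∑ i ∈ Sᶜ, k i = K := by
    have := Finset.sum_add_sum_compl S k
    omega
  have hS2 : ∑ i ∈ S, 2 * k i = 2 * K := by rw [← Finset.mul_sum, hS]
  have hSc2 : ∑ i ∈ Sᶜ, 2 * k i = 2 * K := by rw [← Finset.mul_sum, hSc]
  rw [runoffWinner_congr (P' := P15 K ++ [([a, c, b], 2 * K), ([c, a, b], 2 * K)])]
  · exact runoffWinner_P15_append_acb_cab hK
  · funext x y
    rw [Nw_append, Nw_append, Nw_ofFn_ite, hS2, hSc2]
  · funext x
    rw [pluralityScore_append, pluralityScore_append, pluralityScore_ofFn_ite, hS2, hSc2]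

section Manipulation

variable {K : ℕ} (hK : 0 < K) {M : WProfile}
include hK

theorem Nw_P15_append_c_b_lt (hM : totalW M ≤ 4 * K) :
    Nw (P15 K ++ M) c b < Nw (P15 K ++ M) b c := by
  obtain ⟨-, -, -, -, hbc, hcb⟩ := Nw_P15 K
  have := Nw_le_totalW M c b
  rw [Nw_append, Nw_append]
  omega

theorem pluralityWinner_P15_append_ne_c (hM : totalW M ≤ 4 * K) :
    pluralityWinner Tcab (P15 K ++ M) ≠ c := by
  obtain ⟨-, pb, pc⟩ := pluralityScore_P15 K
  intro h
  have hle := le_argmaxT Tcab (pluralityScore (P15 K ++ M)) b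
  have := pluralityScore_le_totalW M c
  rw [← pluralityWinner, h, pluralityScore_append, pluralityScore_append] at hle
  omega

theorem winners_of_runoffWinner_P15_append_eq_c (hM : totalW M ≤ 4 * K)
    (hwin : runoffWinner Tcab (copelandWinner Tcab) (pluralityWinner Tcab) (P15 K ++ M) = c) :
    copelandWinner Tcab (P15 K ++ M) = c ∧ pluralityWinner Tcab (P15 K ++ M) = a := by
  have hne_c := pluralityWinner_P15_append_ne_c hK hM
  have hcop : copelandWinner Tcab (P15 K ++ M) = c := by
    rcases runoffWinner_eq_or Tcab (copelandWinner Tcab) (pluralityWinner Tcab) (P15 K ++ M)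
      with h | h
    · exact h ▸ hwin
    · exact absurd (h ▸ hwin) hne_c
  refine ⟨hcop, ?_⟩
  cases h : pluralityWinner Tcab (P15 K ++ M)
  · rfl
  · have := runoffWinner_eq_right (T := Tcab) hcop h (by decide) (Nw_P15_append_c_b_lt hK hM)
    exact absurd (hwin ▸ this) (by decide)
  · exact absurd h hne_c

theorem pluralityScore_a_eq_of_runoffWinner_P15_append_eq_c (hMvalid : ∀ p ∈ M, ValidVote p.1)
    (hM : totalW M = 4 * K)
    (hwin : runoffWinner Tcab (copelandWinner Tcab) (pluralityWinner Tcab) (P15 K ++ M) = c) :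
    pluralityScore M a = 2 * K := by
  obtain ⟨hcop, hplu⟩ := winners_of_runoffWinner_P15_append_eq_c hK hM.le hwin
  obtain ⟨-, -, hac, hca, -, -⟩ := Nw_P15 K
  obtain ⟨pa, pb, -⟩ := pluralityScore_P15 K
  have hca_win := Nw_a_c_lt_of_copelandWinner_eq_c hcop (Nw_P15_append_c_b_lt hK hM.le)
  have hba_plu : pluralityScore (P15 K ++ M) b ≤ pluralityScore (P15 K ++ M) a :=
    hplu ▸ le_argmaxT Tcab _ b
  rw [Nw_append, Nw_append] at hca_win
  rw [pluralityScore_append, pluralityScore_append] at hba_plu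
  have hsplit := Nw_add_Nw_eq_totalW hMvalid (show a ≠ c by decide)
  have hfirst := pluralityScore_le_Nw hMvalid (show a ≠ c by decide)
  omega

end Manipulation

theorem copeland_plurality_partition_general
    (K : ℕ) (hK : 0 < K) (t : ℕ) (k : Fin t → ℕ)
    (hsum : ∑ i, k i = 2 * K) :
    (∃ v : Fin t → List Cand, (∀ i, ValidVote (v i)) ∧
        runoffWinner Tcab (copelandWinner Tcab) (pluralityWinner Tcab)
          (P15 K ++ List.ofFn fun i => (v i, 2 * k i)) = Cand.c) ↔
    (∃ S : Finset (Fin t), ∑ i ∈ S, k i = K) := by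
  constructor
  · rintro ⟨v, hv, hwin⟩
    have hvalid : ∀ p ∈ List.ofFn fun i => (v i, 2 * k i), ValidVote p.1 := by
      simp only [List.mem_ofFn]
      rintro _ ⟨i, rfl⟩
      exact hv i
    have hweight : totalW (List.ofFn fun i => (v i, 2 * k i)) = 4 * K := by
      rw [totalW_ofFn, ← Finset.mul_sum, hsum]
      ring
    have h := pluralityScore_a_eq_of_runoffWinner_P15_append_eq_c hK hvalid hweight hwin
    rw [pluralityScore_ofFn, ← Finset.mul_sum] at h
    exact ⟨Finset.univ.filter fun i => (v i).head? = some a, by omega⟩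
  · rintro ⟨S, hS⟩
    refine ⟨fun i => if i ∈ S then [a, c, b] else [c, a, b], fun i => ?_,
      runoffWinner_eq_c_of_sum_eq hK hsum hS⟩
    dsimp only
    split_ifs <;> exact ⟨by decide, by decide⟩

/-- Reduction from PARTITION to manipulating `Copeland + plurality`
(tie-breaking c ≻ a ≻ b): manipulators with weights `2k₁, …, 2k_t` (where
`k₁ + ⋯ + k_t = 2K`) can make `c` win iff the `kᵢ` can be partitioned into
two halves summing to `K`. -/
theorem copeland_plurality_partition
    (K : ℕ) (hK : 0 < K) (t : ℕ) (k : Fin t → ℕ)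
    (hk : ∀ i, 0 < k i) (hsum : ∑ i, k i = 2 * K) :
    (∃ v : Fin t → List Cand, (∀ i, ValidVote (v i)) ∧
        runoffWinner Tcab (copelandWinner Tcab) (pluralityWinner Tcab)
          (P15 K ++ List.ofFn fun i => (v i, 2 * k i)) = Cand.c) ↔
    (∃ S : Finset (Fin t), ∑ i ∈ S, k i = K) :=
  copeland_plurality_partition_general K hK t k hsum
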